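/- arXiv:1604.06750 — 6 statements merged into one kernel-verified Lean document; each statement's English description precedes it below -/
import Mathlib

section
/- Let A be a symmetric real N×N matrix with all diagonal entries nonzero, and write Ω = {1,…,N}. Suppose there exists a nonempty proper subset S ⊊ Ω with 𝒜(S) ⊊ Ω. Then there exist pairwise disjoint subsets Ω̊₁, Ω̊₂, Γ of Ω such that Ω̊₁ and Ω̊₂ are nonempty, Ω = Ω̊₁ ∪ Ω̊₂ ∪ Γ, and Γ = 𝒜(Ω̊₁) \ Ω̊₁ = 𝒜(Ω̊₂) \ Ω̊₂. -/
open Matrix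

/-- The neighborhood `𝒜(S)` of a set `S` of indices with respect to a matrix `A`:
the set of all indices `l` such that `A k l ≠ 0` for some `k ∈ S`. -/
def Matrix.nbhd {N : ℕ} (A : Matrix (Fin N) (Fin N) ℝ) (S : Set (Fin N)) : Set (Fin N) :=
  {l | ∃ k ∈ S, A k l ≠ 0}

lemma nbhd_self_subset {N : ℕ} (A : Matrix (Fin N) (Fin N) ℝ)
    (hdiag : ∀ k, A k k ≠ 0) (T : Set (Fin N)) : T ⊆ A.nbhd T :=
  fun l hl => ⟨l, hl, hdiag l⟩

theorem stmt2 {N : ℕ} (A : Matrix (Fin N) (Fin N) ℝ) (hA : A.IsSymm)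
    (hdiag : ∀ k, A k k ≠ 0)
    (S : Set (Fin N)) (hS : S.Nonempty) (hSprop : S ≠ Set.univ)
    (hAS : A.nbhd S ≠ Set.univ) :
    ∃ O₁ O₂ Γ : Set (Fin N),
      O₁.Nonempty ∧ O₂.Nonempty ∧
      Disjoint O₁ O₂ ∧ Disjoint O₁ Γ ∧ Disjoint O₂ Γ ∧
      O₁ ∪ O₂ ∪ Γ = Set.univ ∧
      Γ = A.nbhd O₁ \ O₁ ∧ Γ = A.nbhd O₂ \ O₂ := by
  have hsym : ∀ i j, A i j = A j i := fun i j => (hA.apply j i)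
  set O₂ : Set (Fin N) := (A.nbhd S)ᶜ with hO₂
  set O₁ : Set (Fin N) := (A.nbhd O₂)ᶜ with hO₁
  set Γ : Set (Fin N) := (O₁ ∪ O₂)ᶜ with hΓ
  -- S ⊆ O₁
  have hSO₁ : S ⊆ O₁ := by
    intro k hk
    intro hkn
    obtain ⟨l, hl, hAlk⟩ := hkn
    exact hl ⟨k, hk, by rw [hsym k l]; exact hAlk⟩
  refine ⟨O₁, O₂, Γ, hS.mono hSO₁, ?_, ?_, ?_, ?_, ?_, ?_, ?_⟩
  · -- O₂ nonempty
    rcases Set.ne_univ_iff_exists_notMem _ |>.mp hAS with ⟨x, hx⟩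
    exact ⟨x, hx⟩
  · -- Disjoint O₁ O₂
    exact Set.disjoint_left.mpr fun x hx hx2 =>
      hx (nbhd_self_subset A hdiag O₂ hx2)
  · exact Set.disjoint_left.mpr fun x hx hxΓ => hxΓ (Or.inl hx)
  · exact Set.disjoint_left.mpr fun x hx hxΓ => hxΓ (Or.inr hx)
  · rw [hΓ, Set.union_compl_self]
  · -- Γ = nbhd O₁ \ O₁
    ext l
    simp only [hΓ, Set.mem_compl_iff, Set.mem_union, Set.mem_diff, not_or]
    constructor
    · rintro ⟨hl1, hl2⟩
      refine ⟨?_, hl1⟩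
      -- l ∉ O₂ means l ∈ nbhd S ⊆ nbhd O₁
      have hlS : l ∈ A.nbhd S := not_not.mp hl2
      obtain ⟨k, hk, hAkl⟩ := hlS
      exact ⟨k, hSO₁ hk, hAkl⟩
    · rintro ⟨hl1, hl2⟩
      refine ⟨hl2, ?_⟩
      -- l ∈ nbhd O₁ and l ∈ O₂ is impossible
      intro hlO₂
      obtain ⟨k, hk, hAkl⟩ := hl1
      exact hk ⟨l, hlO₂, by rw [hsym l k]; exact hAkl⟩
  · -- Γ = nbhd O₂ \ O₂
    ext l
    simp only [hΓ, Set.mem_compl_iff, Set.mem_union, Set.mem_diff, not_or]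
    constructor
    · rintro ⟨hl1, hl2⟩
      exact ⟨not_not.mp hl1, hl2⟩
    · rintro ⟨hl1, hl2⟩
      exact ⟨not_not.mpr hl1, hl2⟩
end

section
/- Let A ∈ ℝ^{N×N} be symmetric, diagonally dominant and negative semidefinite. Let {1,…,N} be partitioned into pairwise disjoint sets Ω̊₁, Ω̊₂, Γ such that A_{kl} = 0 whenever k ∈ Ω̊₁ and l ∈ Ω̊₂ (or vice versa), and assume that every row k ∈ Γ has at least one nonzero off-diagonal entry. Let α_{kl} = α_{lk} ∈ [0,1] be given weights for k,l ∈ Γ. Define A¹ (and symmetrically A², with Ω̊₂ in place of Ω̊₁ and weights 1−α_{kl}) by: A¹_{kl} = A_{kl} if k ∈ Ω̊₁ or l ∈ Ω̊₁; A¹_{kl} = α_{kl} A_{kl} if k,l ∈ Γ with k ≠ l; A¹_{kl} = 0 if k ∈ Ω̊₂ or l ∈ Ω̊₂; and for k ∈ Γ the diagonal A¹_{kk} = A_{kk}·s₁(k)/(s₁(k)+s₂(k)), where s_i(k) = Σ_{l≠k} |Aⁱ_{kl}|. Then A¹ and A² are symmetric, diagonally dominant and negative semidefinite. -/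
/-!
Off the interface, a row of `A¹` is either a row of `A` or zero. On an interface row `k`, the
weights `α` and `1 - α` split every off-diagonal entry of `A` in absolute value, so
`s₁(k) + s₂(k)` is the off-diagonal absolute row sum of `A`, which is at most `|A k k|`; hence
`|A¹ k k| = |A k k| s₁(k) / (s₁(k) + s₂(k)) ≥ s₁(k)`. Thus `A¹` is symmetric and diagonally dominant
with nonpositive diagonal, and likewise `A²`. Such a matrix is negative semidefinite: each
off-diagonal term `x_k A_kl x_l` is bounded by `|A_kl| (x_k² + x_l²) / 2`, and symmetry collects
these bounds row by row against the diagonal.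
-/

open Matrix Finset

namespace Matrix

variable {n : Type*} [Fintype n] [DecidableEq n]

def offDiagAbsRowSum (M : Matrix n n ℝ) (k : n) : ℝ := ∑ l ∈ univ.erase k, |M k l|

def IsDiagDominant (M : Matrix n n ℝ) : Prop := ∀ k, M.offDiagAbsRowSum k ≤ |M k k|

theorem offDiagAbsRowSum_nonneg (M : Matrix n n ℝ) (k : n) : 0 ≤ M.offDiagAbsRowSum k :=
  sum_nonneg fun _ _ => abs_nonneg _

theorem sum_sum_erase_comm {β : Type*} [AddCommMonoid β] (f : n → n → β) :
    ∑ k, ∑ l ∈ univ.erase k, f k l = ∑ k, ∑ l ∈ univ.erase k, f l k :=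
  sum_comm' fun _ _ => by simp [and_comm, ne_comm]

theorem diag_nonpos_of_dotProduct_mulVec_nonpos {M : Matrix n n ℝ}
    (hM : ∀ x, x ⬝ᵥ M *ᵥ x ≤ 0) (k : n) : M k k ≤ 0 := by
  simpa using hM (Pi.single k 1)

theorem IsDiagDominant.dotProduct_mulVec_nonpos {M : Matrix n n ℝ} (hdd : M.IsDiagDominant)
    (hM : M.IsSymm) (hdiag : ∀ k, M k k ≤ 0) (x : n → ℝ) : x ⬝ᵥ M *ᵥ x ≤ 0 := by
  calc x ⬝ᵥ M *ᵥ x = ∑ k, (M k k * x k ^ 2 + ∑ l ∈ univ.erase k, x k * (M k l * x l)) := by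
        refine sum_congr rfl fun k _ => ?_
        rw [mulVec, dotProduct, mul_sum, ← add_sum_erase _ _ (mem_univ k)]
        ring
    _ ≤ ∑ k, (M k k * x k ^ 2 +
          ∑ l ∈ univ.erase k, (|M k l| * x k ^ 2 / 2 + |M k l| * x l ^ 2 / 2)) := by
        gcongr with k _ l _
        nlinarith [sq_nonneg (x k - x l), sq_nonneg (x k + x l), le_abs_self (M k l),
          neg_abs_le (M k l)]
    _ = ∑ k, (M k k + M.offDiagAbsRowSum k) * x k ^ 2 := by
        simp only [sum_add_distrib]
        rw [sum_sum_erase_comm fun k l => |M k l| * x l ^ 2 / 2]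
        simp only [hM.apply, offDiagAbsRowSum, ← sum_add_distrib, add_mul, sum_mul]
        ring_nf
    _ ≤ 0 := sum_nonpos fun k _ => mul_nonpos_of_nonpos_of_nonneg
        (by linarith [hdd k, abs_of_nonpos (hdiag k)]) (sq_nonneg _)

end Matrix

theorem le_mul_div_of_le_of_le {s d a : ℝ} (hs : 0 ≤ s) (hsd : s ≤ d) (hda : d ≤ a) :
    s ≤ a * s / d := by
  rcases (hs.trans hsd).eq_or_lt with hd | hd
  · simp [← hd, le_antisymm (hd ▸ hsd) hs]
  · rw [le_div_iff₀ hd, mul_comm a]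
    exact mul_le_mul_of_nonneg_left hda hs

section Splitting

variable {n : Type*} {A B C : Matrix n n ℝ} {O₁ O₂ Γ : Set n} {α β : n → n → ℝ}

/-- The off-diagonal rules of the splitting; the interface diagonal is prescribed separately. -/
structure IsSplitPart (A B : Matrix n n ℝ) (O₁ O₂ Γ : Set n) (α : n → n → ℝ) : Prop where
  own : ∀ k l, k ∈ O₁ ∨ l ∈ O₁ → B k l = A k l
  interface : ∀ k l, k ∈ Γ → l ∈ Γ → k ≠ l → B k l = α k l * A k l
  other : ∀ k l, k ∈ O₂ ∨ l ∈ O₂ → B k l = 0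

namespace IsSplitPart

theorem isSymm (hB : IsSplitPart A B O₁ O₂ Γ α) (hcover : ∀ k, k ∈ O₁ ∨ k ∈ O₂ ∨ k ∈ Γ)
    (hA : A.IsSymm) (hα : ∀ k l, α k l = α l k) : B.IsSymm := by
  refine IsSymm.ext fun k l => ?_
  by_cases h₁ : k ∈ O₁ ∨ l ∈ O₁
  · rw [hB.own _ _ h₁, hB.own _ _ h₁.symm, hA.apply]
  by_cases h₂ : k ∈ O₂ ∨ l ∈ O₂
  · rw [hB.other _ _ h₂, hB.other _ _ h₂.symm]
  obtain ⟨hk, hl⟩ : k ∈ Γ ∧ l ∈ Γ := by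
    have := hcover k; have := hcover l; tauto
  obtain rfl | hkl := eq_or_ne k l
  · rfl
  rw [hB.interface _ _ hk hl hkl, hB.interface _ _ hl hk hkl.symm, hα, hA.apply]

theorem abs_add_abs (hB : IsSplitPart A B O₁ O₂ Γ α) (hC : IsSplitPart A C O₂ O₁ Γ β)
    (hcover : ∀ k, k ∈ O₁ ∨ k ∈ O₂ ∨ k ∈ Γ) (hα : ∀ k l, 0 ≤ α k l) (hβ : ∀ k l, 0 ≤ β k l)
    (hαβ : ∀ k l, α k l + β k l = 1) {k l : n} (hk : k ∈ Γ) (hkl : k ≠ l) :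
    |B k l| + |C k l| = |A k l| := by
  rcases hcover l with hl | hl | hl
  · rw [hB.own _ _ (.inr hl), hC.other _ _ (.inr hl), abs_zero, add_zero]
  · rw [hB.other _ _ (.inr hl), hC.own _ _ (.inr hl), abs_zero, zero_add]
  · rw [hB.interface _ _ hk hl hkl, hC.interface _ _ hk hl hkl, abs_mul, abs_mul,
      abs_of_nonneg (hα k l), abs_of_nonneg (hβ k l), ← add_mul, hαβ, one_mul]

variable [Fintype n] [DecidableEq n]

theorem offDiagAbsRowSum_add (hB : IsSplitPart A B O₁ O₂ Γ α) (hC : IsSplitPart A C O₂ O₁ Γ β)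
    (hcover : ∀ k, k ∈ O₁ ∨ k ∈ O₂ ∨ k ∈ Γ) (hα : ∀ k l, 0 ≤ α k l) (hβ : ∀ k l, 0 ≤ β k l)
    (hαβ : ∀ k l, α k l + β k l = 1) {k : n} (hk : k ∈ Γ) :
    B.offDiagAbsRowSum k + C.offDiagAbsRowSum k = A.offDiagAbsRowSum k := by
  rw [offDiagAbsRowSum, offDiagAbsRowSum, ← sum_add_distrib]
  exact sum_congr rfl fun l hl =>
    hB.abs_add_abs hC hcover hα hβ hαβ hk (ne_of_mem_erase hl).symm

theorem diag_nonpos (hB : IsSplitPart A B O₁ O₂ Γ α) (hcover : ∀ k, k ∈ O₁ ∨ k ∈ O₂ ∨ k ∈ Γ)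
    (hA : ∀ k, A k k ≤ 0) (d : n → ℝ)
    (hBd : ∀ k ∈ Γ, B k k = A k k * B.offDiagAbsRowSum k / d k)
    (hd : ∀ k ∈ Γ, B.offDiagAbsRowSum k ≤ d k) (k : n) : B k k ≤ 0 := by
  rcases hcover k with hk | hk | hk
  · exact (hB.own k k (.inl hk)).trans_le (hA k)
  · exact (hB.other k k (.inl hk)).le
  · rw [hBd k hk]
    exact div_nonpos_of_nonpos_of_nonneg
      (mul_nonpos_of_nonpos_of_nonneg (hA k) (B.offDiagAbsRowSum_nonneg k))
      ((B.offDiagAbsRowSum_nonneg k).trans (hd k hk))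

theorem isDiagDominant (hB : IsSplitPart A B O₁ O₂ Γ α) (hcover : ∀ k, k ∈ O₁ ∨ k ∈ O₂ ∨ k ∈ Γ)
    (hA : A.IsDiagDominant) (d : n → ℝ)
    (hBd : ∀ k ∈ Γ, B k k = A k k * B.offDiagAbsRowSum k / d k)
    (hd : ∀ k ∈ Γ, B.offDiagAbsRowSum k ≤ d k) (hdA : ∀ k ∈ Γ, d k ≤ |A k k|) :
    B.IsDiagDominant := by
  intro k
  rcases hcover k with hk | hk | hk
  · have hrow : ∀ l, B k l = A k l := fun l => hB.own k l (.inl hk)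
    simpa only [offDiagAbsRowSum, hrow] using hA k
  · simp only [offDiagAbsRowSum, hB.other k _ (.inl hk), abs_zero, sum_const_zero, le_refl]
  · have hs := B.offDiagAbsRowSum_nonneg k
    rw [hBd k hk, abs_div, abs_mul, abs_of_nonneg hs, abs_of_nonneg (hs.trans (hd k hk))]
    exact le_mul_div_of_le_of_le hs (hd k hk) (hdA k hk)

end IsSplitPart

end Splitting

theorem stmt3_general {N : ℕ} (A A1 A2 : Matrix (Fin N) (Fin N) ℝ)
    (hA : A.IsSymm)
    (hdd : ∀ k, ∑ l ∈ Finset.univ.erase k, |A k l| ≤ |A k k|)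
    (hnsd : ∀ x : Fin N → ℝ, x ⬝ᵥ A.mulVec x ≤ 0)
    (O₁ O₂ Γ : Set (Fin N))
    (hcover : O₁ ∪ O₂ ∪ Γ = Set.univ)
    (α : Fin N → Fin N → ℝ)
    (hαsymm : ∀ k l, α k l = α l k)
    (hα0 : ∀ k l, 0 ≤ α k l) (hα1 : ∀ k l, α k l ≤ 1)
    -- defining equations for A¹
    (hA1O1 : ∀ k l, k ∈ O₁ ∨ l ∈ O₁ → A1 k l = A k l)
    (hA1Γ : ∀ k l, k ∈ Γ → l ∈ Γ → k ≠ l → A1 k l = α k l * A k l)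
    (hA1O2 : ∀ k l, k ∈ O₂ ∨ l ∈ O₂ → A1 k l = 0)
    (hA1diag : ∀ k ∈ Γ, A1 k k =
      A k k * (∑ l ∈ Finset.univ.erase k, |A1 k l|) /
        ((∑ l ∈ Finset.univ.erase k, |A1 k l|) + (∑ l ∈ Finset.univ.erase k, |A2 k l|)))
    -- defining equations for A²
    (hA2O2 : ∀ k l, k ∈ O₂ ∨ l ∈ O₂ → A2 k l = A k l)
    (hA2Γ : ∀ k l, k ∈ Γ → l ∈ Γ → k ≠ l → A2 k l = (1 - α k l) * A k l)
    (hA2O1 : ∀ k l, k ∈ O₁ ∨ l ∈ O₁ → A2 k l = 0)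
    (hA2diag : ∀ k ∈ Γ, A2 k k =
      A k k * (∑ l ∈ Finset.univ.erase k, |A2 k l|) /
        ((∑ l ∈ Finset.univ.erase k, |A1 k l|) + (∑ l ∈ Finset.univ.erase k, |A2 k l|))) :
    (A1.IsSymm ∧ (∀ k, ∑ l ∈ Finset.univ.erase k, |A1 k l| ≤ |A1 k k|) ∧
      (∀ x : Fin N → ℝ, x ⬝ᵥ A1.mulVec x ≤ 0)) ∧
    (A2.IsSymm ∧ (∀ k, ∑ l ∈ Finset.univ.erase k, |A2 k l| ≤ |A2 k k|) ∧
      (∀ x : Fin N → ℝ, x ⬝ᵥ A2.mulVec x ≤ 0)) := by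
  have hcover₁ : ∀ k, k ∈ O₁ ∨ k ∈ O₂ ∨ k ∈ Γ := fun k =>
    or_assoc.1 (Set.eq_univ_iff_forall.1 hcover k)
  have hcover₂ : ∀ k, k ∈ O₂ ∨ k ∈ O₁ ∨ k ∈ Γ := fun k => or_left_comm.1 (hcover₁ k)
  have h₁ : IsSplitPart A A1 O₁ O₂ Γ α := ⟨hA1O1, hA1Γ, hA1O2⟩
  have h₂ : IsSplitPart A A2 O₂ O₁ Γ (fun k l => 1 - α k l) := ⟨hA2O2, hA2Γ, hA2O1⟩
  have hdiag := diag_nonpos_of_dotProduct_mulVec_nonpos hnsd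
  let d : Fin N → ℝ := fun k => A1.offDiagAbsRowSum k + A2.offDiagAbsRowSum k
  have hdA : ∀ k ∈ Γ, d k ≤ |A k k| := fun k hk =>
    (h₁.offDiagAbsRowSum_add h₂ hcover₁ hα0 (fun k l => sub_nonneg.2 (hα1 k l))
      (fun _ _ => add_sub_cancel _ _) hk).trans_le (hdd k)
  have hd₁ : ∀ k ∈ Γ, A1.offDiagAbsRowSum k ≤ d k := fun k _ =>
    le_add_of_nonneg_right (A2.offDiagAbsRowSum_nonneg k)
  have hd₂ : ∀ k ∈ Γ, A2.offDiagAbsRowSum k ≤ d k := fun k _ =>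
    le_add_of_nonneg_left (A1.offDiagAbsRowSum_nonneg k)
  have hs₁ := h₁.isSymm hcover₁ hA hαsymm
  have hs₂ := h₂.isSymm hcover₂ hA fun k l => by rw [hαsymm]
  have hdd₁ := h₁.isDiagDominant hcover₁ hdd d hA1diag hd₁ hdA
  have hdd₂ := h₂.isDiagDominant hcover₂ hdd d hA2diag hd₂ hdA
  exact
    ⟨⟨hs₁, hdd₁, hdd₁.dotProduct_mulVec_nonpos hs₁ (h₁.diag_nonpos hcover₁ hdiag d hA1diag hd₁)⟩,
      ⟨hs₂, hdd₂, hdd₂.dotProduct_mulVec_nonpos hs₂ (h₂.diag_nonpos hcover₂ hdiag d hA2diag hd₂)⟩⟩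

theorem stmt3 {N : ℕ} (A A1 A2 : Matrix (Fin N) (Fin N) ℝ)
    (hA : A.IsSymm)
    (hdd : ∀ k, ∑ l ∈ Finset.univ.erase k, |A k l| ≤ |A k k|)
    (hnsd : ∀ x : Fin N → ℝ, x ⬝ᵥ A.mulVec x ≤ 0)
    (O₁ O₂ Γ : Set (Fin N))
    (hd12 : Disjoint O₁ O₂) (hd1G : Disjoint O₁ Γ) (hd2G : Disjoint O₂ Γ)
    (hcover : O₁ ∪ O₂ ∪ Γ = Set.univ)
    (hzero : ∀ k l, (k ∈ O₁ ∧ l ∈ O₂) ∨ (k ∈ O₂ ∧ l ∈ O₁) → A k l = 0)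
    (hΓrow : ∀ k ∈ Γ, ∃ l, l ≠ k ∧ A k l ≠ 0)
    (α : Fin N → Fin N → ℝ)
    (hαsymm : ∀ k l, α k l = α l k)
    (hα0 : ∀ k l, 0 ≤ α k l) (hα1 : ∀ k l, α k l ≤ 1)
    -- defining equations for A¹
    (hA1O1 : ∀ k l, k ∈ O₁ ∨ l ∈ O₁ → A1 k l = A k l)
    (hA1Γ : ∀ k l, k ∈ Γ → l ∈ Γ → k ≠ l → A1 k l = α k l * A k l)
    (hA1O2 : ∀ k l, k ∈ O₂ ∨ l ∈ O₂ → A1 k l = 0)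
    (hA1diag : ∀ k ∈ Γ, A1 k k =
      A k k * (∑ l ∈ Finset.univ.erase k, |A1 k l|) /
        ((∑ l ∈ Finset.univ.erase k, |A1 k l|) + (∑ l ∈ Finset.univ.erase k, |A2 k l|)))
    -- defining equations for A²
    (hA2O2 : ∀ k l, k ∈ O₂ ∨ l ∈ O₂ → A2 k l = A k l)
    (hA2Γ : ∀ k l, k ∈ Γ → l ∈ Γ → k ≠ l → A2 k l = (1 - α k l) * A k l)
    (hA2O1 : ∀ k l, k ∈ O₁ ∨ l ∈ O₁ → A2 k l = 0)
    (hA2diag : ∀ k ∈ Γ, A2 k k =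
      A k k * (∑ l ∈ Finset.univ.erase k, |A2 k l|) /
        ((∑ l ∈ Finset.univ.erase k, |A1 k l|) + (∑ l ∈ Finset.univ.erase k, |A2 k l|))) :
    (A1.IsSymm ∧ (∀ k, ∑ l ∈ Finset.univ.erase k, |A1 k l| ≤ |A1 k k|) ∧
      (∀ x : Fin N → ℝ, x ⬝ᵥ A1.mulVec x ≤ 0)) ∧
    (A2.IsSymm ∧ (∀ k, ∑ l ∈ Finset.univ.erase k, |A2 k l| ≤ |A2 k k|) ∧
      (∀ x : Fin N → ℝ, x ⬝ᵥ A2.mulVec x ≤ 0)) :=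
  stmt3_general A A1 A2 hA hdd hnsd O₁ O₂ Γ hcover α hαsymm hα0 hα1 hA1O1 hA1Γ hA1O2 hA1diag hA2O2
    hA2Γ hA2O1 hA2diag
end

section
/- Let A ∈ ℝ^{N×N} be symmetric negative semidefinite, B ∈ ℝ^{N×N} symmetric positive definite, and S ∈ ℝ^{N×K}. Then each entry of the matrix-valued function F(z) = Sᵀ (A + zB)⁻¹ S is a holomorphic (complex differentiable) function of z on the open set ℂ \ [0,∞). -/
/-!
If `(A + z B) x = 0` with `x ≠ 0`, then `z = x* (-A) x / x* B x` is a quotient of a nonnegative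
and a positive number, so `A + z B` is invertible off `[0, ∞)`. There, `F` is a fixed linear
function of `(A + z B)⁻¹`, and inversion is holomorphic on the units of the Banach algebra of
matrices.
-/
open Matrix
open scoped ComplexOrder

namespace Matrix

variable {n : Type*} [Fintype n]

theorem PosSemidef.map_ofReal {A : Matrix n n ℝ} (hA : A.PosSemidef) :
    (A.map Complex.ofReal).PosSemidef := by
  obtain ⟨m, v, rfl⟩ := posSemidef_iff_eq_sum_vecMulVec.1 hA
  have hmap : (∑ i, vecMulVec (v i) (star (v i))).map Complex.ofReal =
      ∑ i, vecMulVec (fun k => (v i k : ℂ)) (star fun k => (v i k : ℂ)) := by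
    change (Complex.ofRealHom : ℝ →+ ℂ).mapMatrix _ = _
    rw [map_sum]
    refine Finset.sum_congr rfl fun i _ => ?_
    ext k l
    simp [vecMulVec_apply]
  rw [hmap]
  exact posSemidef_sum _ fun i _ => posSemidef_vecMulVec_self_star _

variable [DecidableEq n]

theorem PosDef.map_ofReal {A : Matrix n n ℝ} (hA : A.PosDef) : (A.map Complex.ofReal).PosDef :=
  hA.posSemidef.map_ofReal.posDef_iff_isUnit.2 (hA.isUnit.map Complex.ofRealHom.mapMatrix)

variable {𝕜 : Type*} [RCLike 𝕜]

theorem isUnit_add_smul_of_not_nonneg {A B : Matrix n n 𝕜} (hA : (-A).PosSemidef)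
    (hB : B.PosDef) {z : 𝕜} (hz : ¬ 0 ≤ z) : IsUnit (A + z • B) := by
  rw [isUnit_iff_isUnit_det, isUnit_iff_ne_zero]
  intro hdet
  obtain ⟨x, hx0, hx⟩ := exists_mulVec_eq_zero_iff.2 hdet
  have hquad : star x ⬝ᵥ (-A) *ᵥ x = z * (star x ⬝ᵥ B *ᵥ x) := by
    have := congrArg (star x ⬝ᵥ ·) hx
    simp only [add_mulVec, smul_mulVec, dotProduct_add, dotProduct_smul, dotProduct_zero,
      smul_eq_mul] at this
    rw [neg_mulVec, dotProduct_neg]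
    linear_combination -this
  have hb := hB.dotProduct_mulVec_pos hx0
  refine hz ?_
  rw [eq_div_of_mul_eq hb.ne' hquad.symm]
  exact div_nonneg (hA.dotProduct_mulVec_nonneg x) hb.le

open scoped Matrix.Norms.L2Operator in
theorem differentiableOn_inv_add_smul (A B : Matrix n n 𝕜) :
    DifferentiableOn 𝕜 (fun z : 𝕜 => (A + z • B)⁻¹) {z | IsUnit (A + z • B)} := by
  simp_rw [nonsing_inv_eq_ringInverse]
  exact DifferentiableOn.inverse (by fun_prop) fun z hz => hz

open scoped Matrix.Norms.L2Operator in
theorem differentiableOn_mul_inv_add_smul_mul_apply {m p : Type*} (P : Matrix m n 𝕜)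
    (A B : Matrix n n 𝕜) (Q : Matrix n p 𝕜) (i : m) (j : p) :
    DifferentiableOn 𝕜 (fun z : 𝕜 => (P * (A + z • B)⁻¹ * Q) i j) {z | IsUnit (A + z • B)} := by
  let entry : Matrix n n 𝕜 →ₗ[𝕜] 𝕜 :=
    { toFun := fun X => (P * X * Q) i j
      map_add' := fun X Y => by simp [Matrix.mul_add, Matrix.add_mul]
      map_smul' := fun c X => by simp }
  exact (LinearMap.toContinuousLinearMap entry).differentiable.comp_differentiableOn
    (differentiableOn_inv_add_smul A B)

end Matrix

theorem stmt7 {N K : ℕ} (A B : Matrix (Fin N) (Fin N) ℝ) (S : Matrix (Fin N) (Fin K) ℝ)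
    (hA : A.IsSymm) (hAneg : ∀ x : Fin N → ℝ, x ⬝ᵥ A.mulVec x ≤ 0)
    (hB : B.PosDef) :
    ∀ (i : Fin K) (j : Fin K),
      DifferentiableOn ℂ
        (fun z : ℂ =>
          ((S.map Complex.ofReal)ᵀ *
            (A.map Complex.ofReal + z • B.map Complex.ofReal)⁻¹ *
            S.map Complex.ofReal) i j)
        {z : ℂ | z.im ≠ 0 ∨ z.re < 0} := by
  intro i j
  have hA' : (-A).PosSemidef := .of_dotProduct_mulVec_nonneg
    (isHermitian_iff_isSymm.2 hA.neg) fun x => by simpa [neg_mulVec] using hAneg x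
  have hAℂ : (-A.map Complex.ofReal).PosSemidef := by
    simpa [Matrix.map_neg] using hA'.map_ofReal
  refine (differentiableOn_mul_inv_add_smul_mul_apply _ _ _ _ i j).mono fun z hz => ?_
  refine isUnit_add_smul_of_not_nonneg hAℂ hB.map_ofReal fun hz0 => ?_
  rw [Complex.nonneg_iff] at hz0
  rcases hz with him | hre
  · exact him hz0.2.symm
  · exact hz0.1.not_gt hre
end

section
/- Let A ∈ ℝ^{N×N} be symmetric negative semidefinite, B ∈ ℝ^{N×N} symmetric positive definite, and S ∈ ℝ^{N×K}. For every z ∈ ℂ with Im z > 0, the Hermitian matrix i·(F(z) − F(z)ᴴ) is positive semidefinite, where F(z) = Sᵀ(A + zB)⁻¹S; equivalently, the imaginary part of −F(z) is positive semidefinite. -/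
/-!
Write `M = A + z B` and `G = M⁻¹`. The resolvent identity `G - Gᴴ = G (Mᴴ - M) Gᴴ` turns
`i (F - Fᴴ) = Sᵀ · i (G - Gᴴ) · S` into the congruence `(Gᴴ S)ᴴ · i (Mᴴ - M) · (Gᴴ S)`, and
`i (Mᴴ - M) = 2 Im z · B` is positive semidefinite because `A` is Hermitian.
-/

open Matrix
open scoped ComplexOrder

namespace Matrix

variable {n m : Type*}

theorem PosSemidef.map_ofReal_s8 [Fintype n] [DecidableEq n] {B : Matrix n n ℝ}
    (hB : B.PosSemidef) : (B.map Complex.ofReal).PosSemidef := by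
  open scoped MatrixOrder in
  obtain ⟨L, rfl⟩ := CStarAlgebra.nonneg_iff_eq_star_mul_self.mp hB.nonneg
  change ((star L * L).map Complex.ofRealHom).PosSemidef
  rw [star_eq_conjTranspose, Matrix.map_mul,
    conjTranspose_map (f := Complex.ofRealHom) (fun r ↦ (Complex.conj_ofReal r).symm)]
  exact posSemidef_conjTranspose_mul_self _

/-- No invertibility is needed: for singular `M` both sides vanish, as then `M⁻¹ = 0`. -/
theorem inv_sub_conjTranspose_inv {α : Type*} [Fintype n] [DecidableEq n] [CommRing α]
    [StarRing α] (M : Matrix n n α) : M⁻¹ - M⁻¹ᴴ = M⁻¹ * (Mᴴ - M) * M⁻¹ᴴ := by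
  rw [conjTranspose_nonsing_inv, inv_sub_inv (isUnit_conjTranspose M).symm]

theorem PosSemidef.I_smul_sub_conjTranspose_mul_mul_same [Fintype n] [Fintype m]
    {X : Matrix n n ℂ} (hX : (Complex.I • (X - Xᴴ)).PosSemidef) (S : Matrix n m ℂ) :
    (Complex.I • (Sᴴ * X * S - (Sᴴ * X * S)ᴴ)).PosSemidef := by
  rw [conjTranspose_mul, conjTranspose_mul, conjTranspose_conjTranspose, ← Matrix.mul_assoc,
    ← Matrix.sub_mul, ← Matrix.mul_sub, ← Matrix.smul_mul, ← Matrix.mul_smul]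
  exact hX.conjTranspose_mul_mul_same S

theorem PosSemidef.I_smul_inv_sub_conjTranspose_inv [Fintype n] [DecidableEq n]
    {M : Matrix n n ℂ} (hM : (Complex.I • (Mᴴ - M)).PosSemidef) :
    (Complex.I • (M⁻¹ - M⁻¹ᴴ)).PosSemidef := by
  rw [inv_sub_conjTranspose_inv, ← Matrix.smul_mul, ← Matrix.mul_smul]
  exact hM.mul_mul_conjTranspose_same M⁻¹

theorem posSemidef_I_smul_conjTranspose_sub_self_add_smul {A B : Matrix n n ℂ}
    (hA : A.IsHermitian) (hB : B.PosSemidef) {z : ℂ} (hz : 0 ≤ z.im) :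
    (Complex.I • ((A + z • B)ᴴ - (A + z • B))).PosSemidef := by
  have h : Complex.I • ((A + z • B)ᴴ - (A + z • B)) = ((2 * z.im : ℝ) : ℂ) • B := by
    rw [conjTranspose_add, conjTranspose_smul, hA.eq, hB.isHermitian.eq, add_sub_add_left_eq_sub,
      ← sub_smul, smul_smul]
    congr 1
    simp [Complex.ext_iff]
    ring
  rw [h]
  exact hB.smul (by positivity)

end Matrix

theorem stmt8_general {N K : ℕ} (A B : Matrix (Fin N) (Fin N) ℝ) (S : Matrix (Fin N) (Fin K) ℝ)
    (hA : A.IsSymm)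
    (hB : B.PosDef)
    (z : ℂ) (hz : 0 < z.im)
    (F : Matrix (Fin K) (Fin K) ℂ)
    (hF : F = (S.map Complex.ofReal)ᵀ *
      (A.map Complex.ofReal + z • B.map Complex.ofReal)⁻¹ * S.map Complex.ofReal) :
    (Complex.I • (F - Fᴴ)).PosSemidef := by
  have hA' : (A.map Complex.ofReal).IsHermitian :=
    (isHermitian_iff_isSymm.mpr hA).map _ fun r ↦ (Complex.conj_ofReal r).symm
  have hS : (S.map Complex.ofReal)ᵀ = (S.map Complex.ofReal)ᴴ := by
    rw [← conjTranspose_map _ fun r ↦ (Complex.conj_ofReal r).symm,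
      conjTranspose_eq_transpose_of_trivial, transpose_map]
  rw [hF, hS]
  exact (posSemidef_I_smul_conjTranspose_sub_self_add_smul hA' hB.posSemidef.map_ofReal_s8 hz.le
    |>.I_smul_inv_sub_conjTranspose_inv).I_smul_sub_conjTranspose_mul_mul_same _

theorem stmt8 {N K : ℕ} (A B : Matrix (Fin N) (Fin N) ℝ) (S : Matrix (Fin N) (Fin K) ℝ)
    (hA : A.IsSymm) (hAneg : ∀ x : Fin N → ℝ, x ⬝ᵥ A.mulVec x ≤ 0)
    (hB : B.PosDef)
    (z : ℂ) (hz : 0 < z.im)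
    (F : Matrix (Fin K) (Fin K) ℂ)
    (hF : F = (S.map Complex.ofReal)ᵀ *
      (A.map Complex.ofReal + z • B.map Complex.ofReal)⁻¹ * S.map Complex.ofReal) :
    (Complex.I • (F - Fᴴ)).PosSemidef :=
  stmt8_general A B S hA hB z hz F hF
end

section
/- Let m ≥ 1, let z be a negative real number, and let L₁,…,L_m and L̂₁,…,L̂_m be symmetric positive definite real K×K matrices; let D₁ be the head of the S-fraction recursion. Suppose U¹,…,U^{m+1} are real K×K matrices with U^{m+1} = 0 satisfying the block three-point scheme L₁(U² − U¹) + z·L̂₁⁻¹U¹ = −I and, for k = 2,…,m, L_k(U^{k+1} − U^k) − L_{k−1}(U^k − U^{k−1}) + z·L̂_k⁻¹U^k = 0. Then U¹ = D₁⁻¹, i.e., the boundary block of the solution of the three-point scheme equals the value of the matrix Stieltjes continued fraction. -/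
/-!
Going down the chain, `D k` is the impedance seen at node `k`: by downward induction it is
positive definite and `D k * U k = L k * (U k - U (k + 1)) - z • ((Lhat k)⁻¹ * U k)`. The scheme at
node `k + 1` turns this into `D (k + 1) * U (k + 1) = L k * (U k - U (k + 1))`, which is the series
connection of `L k` with `D (k + 1)`: `((L k)⁻¹ + (D (k + 1))⁻¹)⁻¹ * U k = D (k + 1) * U (k + 1)`.
At node `1` the scheme says that the right-hand side is `1`, so `D 1 * U 1 = 1`.
-/

open Matrix

namespace Matrix

variable {n : Type*} [Fintype n] [DecidableEq n]

theorem inv_add_inv_inv_mul_eq {R : Type*} [CommRing R] {A B X Y : Matrix n n R}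
    (hA : IsUnit A) (hB : IsUnit B) (hAB : IsUnit (A⁻¹ + B⁻¹))
    (h : (B + A) * X = A * Y) : (A⁻¹ + B⁻¹)⁻¹ * Y = B * X := by
  rw [isUnit_iff_isUnit_det] at hA hB hAB
  have hY : (A⁻¹ + B⁻¹) * (B * X) = Y :=
    calc (A⁻¹ + B⁻¹) * (B * X) = A⁻¹ * (B * X) + A⁻¹ * (A * X) := by
          rw [Matrix.add_mul, nonsing_inv_mul_cancel_left _ _ hB,
            nonsing_inv_mul_cancel_left _ _ hA]
      _ = A⁻¹ * (A * Y) := by rw [← Matrix.mul_add, ← Matrix.add_mul, h]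
      _ = Y := nonsing_inv_mul_cancel_left _ _ hA
  rw [← hY, nonsing_inv_mul_cancel_left _ _ hAB]

theorem PosDef.sub_smul_inv {M C : Matrix n n ℝ} (hM : M.PosDef) (hC : C.PosDef) {z : ℝ}
    (hz : z < 0) : (M - z • C⁻¹).PosDef := by
  rw [sub_eq_add_neg, ← neg_smul]
  exact hM.add (hC.inv.smul (neg_pos.mpr hz))

theorem PosDef.inv_add_inv_inv {A B : Matrix n n ℝ} (hA : A.PosDef) (hB : B.PosDef) :
    (A⁻¹ + B⁻¹)⁻¹.PosDef :=
  (hA.inv.add hB.inv).inv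

theorem PosDef.inv_add_inv_inv_sub_smul_mul_eq {A B C X Y : Matrix n n ℝ} (hA : A.PosDef)
    (hB : B.PosDef) (z : ℝ) (h : B * Y = A * (X - Y)) :
    ((A⁻¹ + B⁻¹)⁻¹ - z • C) * X = A * (X - Y) - z • (C * X) := by
  have series : (A⁻¹ + B⁻¹)⁻¹ * X = B * Y :=
    inv_add_inv_inv_mul_eq hA.isUnit hB.isUnit (hA.inv.add hB.inv).isUnit (by
      rw [Matrix.add_mul, h, Matrix.mul_sub]; abel)
  rw [Matrix.sub_mul, series, h, smul_mul_assoc]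

end Matrix

theorem stmt14 {K : ℕ} (m : ℕ) (hm : 1 ≤ m) (z : ℝ) (hz : z < 0)
    (L Lhat : ℕ → Matrix (Fin K) (Fin K) ℝ)
    (hL : ∀ k, 1 ≤ k → k ≤ m → (L k).PosDef)
    (hLhat : ∀ k, 1 ≤ k → k ≤ m → (Lhat k).PosDef)
    -- the S-fraction backward recursion
    (D : ℕ → Matrix (Fin K) (Fin K) ℝ)
    (hDm : D m = L m - z • (Lhat m)⁻¹)
    (hDk : ∀ k, 1 ≤ k → k < m →
      D k = ((L k)⁻¹ + (D (k + 1))⁻¹)⁻¹ - z • (Lhat k)⁻¹)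
    -- the block three-point scheme with identity input
    (U : ℕ → Matrix (Fin K) (Fin K) ℝ)
    (hUtop : U (m + 1) = 0)
    (hU1 : L 1 * (U 2 - U 1) + z • ((Lhat 1)⁻¹ * U 1) = -1)
    (hUk : ∀ k, 2 ≤ k → k ≤ m →
      L k * (U (k + 1) - U k) - L (k - 1) * (U k - U (k - 1)) +
        z • ((Lhat k)⁻¹ * U k) = 0) :
    U 1 = (D 1)⁻¹ := by
  have impedance : ∀ k, 1 ≤ k → k ≤ m → (D k).PosDef ∧
      D k * U k = L k * (U k - U (k + 1)) - z • ((Lhat k)⁻¹ * U k) := by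
    intro k hk1 hkm
    induction hkm using Nat.decreasingInduction with
    | self =>
      refine ⟨hDm ▸ (hL m hm le_rfl).sub_smul_inv (hLhat m hm le_rfl) hz, ?_⟩
      rw [hDm, hUtop, sub_zero, Matrix.sub_mul, smul_mul_assoc]
    | of_succ k hkm ih =>
      obtain ⟨hDpos, hDU⟩ := ih (by omega)
      have flux : D (k + 1) * U (k + 1) = L k * (U k - U (k + 1)) := by
        have hsch := hUk (k + 1) (by omega) hkm
        rw [Nat.add_sub_cancel] at hsch
        rw [hDU]
        simp only [Matrix.mul_sub] at hsch ⊢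
        linear_combination (norm := module) -hsch
      have hLk := hL k hk1 hkm.le
      rw [hDk k hk1 hkm]
      exact ⟨(hLk.inv_add_inv_inv hDpos).sub_smul_inv (hLhat k hk1 hkm.le) hz,
        hLk.inv_add_inv_inv_sub_smul_mul_eq hDpos z flux⟩
  have hD1U1 : D 1 * U 1 = 1 := by
    rw [(impedance 1 le_rfl hm).2]
    rw [Matrix.mul_sub] at hU1 ⊢
    linear_combination (norm := module) -hU1
  exact (inv_eq_right_inv hD1U1).symm
end

section
/- Let p ≥ 1 and K, K₁,…,K_p be positive integers. For each i = 1,…,p let m_i ≥ 1 and let L^{(i)}₁,…,L^{(i)}_{m_i} and L̂^{(i)}₁,…,L̂^{(i)}_{m_i} be symmetric positive definite real K_i×K_i matrices, and let D^{(i)}₁(z) denote the head of the S-fraction backward recursion with these coefficients at the scalar z. Let Q_i ∈ ℝ^{K×K_i} be real matrices with Σ_{i=1}^p Q_iQ_iᵀ positive definite, and set M(z) = Σ_{i=1}^p Q_i D^{(i)}₁(z) Q_iᵀ. Then: (a) for every real z < 0, M(z) is symmetric positive definite, and hence M(z)⁻¹ is symmetric positive definite; (b) for every z ∈ ℂ with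 Im z > 0 (with the recursion taken over ℂ), i·(M(z) − M(z)ᴴ) is positive definite, M(z) is invertible, and i·((M(z)⁻¹)ᴴ − M(z)⁻¹) is positive definite, i.e., the imaginary part of M(z)⁻¹ is positive definite. -/
/-!
`(I • (A - Aᴴ)).PosDef` says that `Im A = (A - Aᴴ)/(2i)` is negative definite.
On the negative real axis each step of the S-fraction recursion (inversion, adding a positive
definite matrix, adding `-z • L̂⁻¹`) preserves positive definiteness. In the upper half-plane the
same steps preserve negative definiteness of the imaginary part: subtracting `w • L̂⁻¹` adds
`-Im w • L̂⁻¹` to it, adding a Hermitian matrix leaves it unchanged, and inversion flips its sign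
through the congruence `I • (A⁻¹ᴴ - A⁻¹) = A⁻¹ᴴ (I • (A - Aᴴ)) A⁻¹`. Finally
`xᴴ (∑ Qᵢ Aᵢ Qᵢᴴ) x = ∑ (Qᵢᴴ x)ᴴ Aᵢ (Qᵢᴴ x)`, and positive definiteness of `∑ Qᵢ Qᵢᴴ` makes
some `Qᵢᴴ x` nonzero.
-/

open Matrix
open scoped ComplexOrder

namespace Matrix

variable {n : Type*}

theorem transpose_map_ofReal {m : Type*} (Q : Matrix m n ℝ) :
    (Q.map Complex.ofReal)ᵀ = (Q.map Complex.ofReal)ᴴ := by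
  rw [← conjTranspose_map _ (fun r => (Complex.conj_ofReal r).symm), ← transpose_map,
    conjTranspose_eq_transpose_of_trivial]

theorem posDef_I_smul_sub_conjTranspose_sub_smul {A B : Matrix n n ℂ} {w : ℂ} (hw : 0 < w.im)
    (hA : (Complex.I • (A - Aᴴ)).PosSemidef) (hB : B.PosDef) :
    (Complex.I • ((A - w • B) - (A - w • B)ᴴ)).PosDef := by
  have hw' : ((2 * w.im : ℝ) : ℂ) = Complex.I * (star w - w) := by
    rw [Complex.star_def, ← neg_sub, Complex.sub_conj]
    push_cast
    linear_combination (2 * (w.im : ℂ)) * Complex.I_sq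
  have hsplit : Complex.I • ((A - w • B) - (A - w • B)ᴴ)
      = Complex.I • (A - Aᴴ) + (2 * w.im) • B := by
    rw [conjTranspose_sub, conjTranspose_smul, hB.1.eq, ← Complex.coe_smul, hw']
    module
  rw [hsplit]
  exact PosDef.posSemidef_add hA (hB.smul (by positivity))

variable [Fintype n]

theorem PosDef.sum_mul_mul_conjTranspose {R : Type*} [CommRing R] [PartialOrder R]
    [StarRing R] [IsOrderedCancelAddMonoid R] {ι : Type*} [Fintype ι] {k : ι → Type*}
    [∀ i, Fintype (k i)] {C : (i : ι) → Matrix n (k i) R} {A : (i : ι) → Matrix (k i) (k i) R}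
    (hC : (∑ i, C i * (C i)ᴴ).PosDef) (hA : ∀ i, (A i).PosDef) :
    (∑ i, C i * A i * (C i)ᴴ).PosDef := by
  have hquad : ∀ i (B : Matrix (k i) (k i) R) (x : n → R),
      star x ⬝ᵥ (C i * B * (C i)ᴴ) *ᵥ x = star ((C i)ᴴ *ᵥ x) ⬝ᵥ B *ᵥ ((C i)ᴴ *ᵥ x) := by
    intro i B x
    rw [star_mulVec, conjTranspose_conjTranspose, mulVec_mulVec, dotProduct_mulVec,
      dotProduct_mulVec, vecMul_vecMul, Matrix.mul_assoc]
  have hherm : (∑ i, C i * A i * (C i)ᴴ).IsHermitian := by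
    rw [IsHermitian, conjTranspose_sum]
    exact Finset.sum_congr rfl fun i _ => (isHermitian_mul_mul_conjTranspose _ (hA i).1).eq
  refine .of_dotProduct_mulVec_pos hherm fun x hx => ?_
  obtain ⟨j, hj⟩ : ∃ j, (C j)ᴴ *ᵥ x ≠ 0 := by
    by_contra! h
    have hzero : ∀ i, star x ⬝ᵥ (C i * (C i)ᴴ) *ᵥ x = 0 := fun i => by
      simp [← mulVec_mulVec, h]
    simpa [sum_mulVec, dotProduct_sum, hzero] using hC.dotProduct_mulVec_pos hx
  rw [sum_mulVec, dotProduct_sum]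
  refine Finset.sum_pos' (fun i _ => ?_) ⟨j, Finset.mem_univ j, ?_⟩
  · rw [hquad]
    exact (hA i).posSemidef.dotProduct_mulVec_nonneg _
  · rw [hquad]
    exact (hA j).dotProduct_mulVec_pos hj

theorem posDef_I_smul_sub_conjTranspose_sum_mul_mul_conjTranspose {ι : Type*} [Fintype ι]
    {k : ι → Type*} [∀ i, Fintype (k i)] {C : (i : ι) → Matrix n (k i) ℂ}
    {A : (i : ι) → Matrix (k i) (k i) ℂ}
    (hC : (∑ i, C i * (C i)ᴴ).PosDef) (hA : ∀ i, (Complex.I • (A i - (A i)ᴴ)).PosDef) :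
    (Complex.I • (∑ i, C i * A i * (C i)ᴴ - (∑ i, C i * A i * (C i)ᴴ)ᴴ)).PosDef := by
  have hexpand : Complex.I • (∑ i, C i * A i * (C i)ᴴ - (∑ i, C i * A i * (C i)ᴴ)ᴴ)
      = ∑ i, C i * (Complex.I • (A i - (A i)ᴴ)) * (C i)ᴴ := by
    simp only [conjTranspose_sum, conjTranspose_mul, conjTranspose_conjTranspose,
      ← Finset.sum_sub_distrib, Finset.smul_sum, Matrix.mul_smul, Matrix.smul_mul,
      Matrix.mul_sub, Matrix.sub_mul, Matrix.mul_assoc]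
  rw [hexpand]
  exact hC.sum_mul_mul_conjTranspose hA

variable [DecidableEq n]

open scoped MatrixOrder in
theorem PosDef.map_ofReal_s19 {M : Matrix n n ℝ} (hM : M.PosDef) :
    (M.map Complex.ofReal).PosDef := by
  have hdet : (M.map Complex.ofReal).det ≠ 0 := by
    change (Complex.ofRealHom.mapMatrix M).det ≠ 0
    rw [← Complex.ofRealHom.map_det M]
    exact Complex.ofReal_ne_zero.mpr hM.det_pos.ne'
  obtain ⟨y, rfl⟩ := CStarAlgebra.nonneg_iff_eq_star_mul_self.mp hM.posSemidef.nonneg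
  have hfactor :
      (star y * y).map Complex.ofReal = (y.map Complex.ofReal)ᴴ * y.map Complex.ofReal := by
    rw [star_eq_conjTranspose, ← conjTranspose_map _ (fun r => (Complex.conj_ofReal r).symm)]
    exact Matrix.map_mul (f := Complex.ofRealHom)
  rw [hfactor] at hdet ⊢
  exact (posSemidef_conjTranspose_mul_self _).posDef_iff_det_ne_zero.mpr hdet

theorem isUnit_of_posDef_I_smul_sub_conjTranspose {A : Matrix n n ℂ}
    (h : (Complex.I • (A - Aᴴ)).PosDef) : IsUnit A := by
  rw [isUnit_iff_isUnit_det, isUnit_iff_ne_zero]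
  intro hdet
  obtain ⟨v, hv, hAv⟩ := exists_mulVec_eq_zero_iff.mpr hdet
  have hAHv : star v ⬝ᵥ Aᴴ *ᵥ v = 0 := by
    rw [dotProduct_mulVec, ← star_mulVec, hAv, star_zero, zero_dotProduct]
  simpa [smul_mulVec, sub_mulVec, hAv, hAHv] using h.dotProduct_mulVec_pos hv

theorem posDef_I_smul_conjTranspose_inv_sub {A : Matrix n n ℂ}
    (h : (Complex.I • (A - Aᴴ)).PosDef) : (Complex.I • ((A⁻¹)ᴴ - A⁻¹)).PosDef := by
  have hA := isUnit_of_posDef_I_smul_sub_conjTranspose h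
  have hdet := (isUnit_iff_isUnit_det A).mp hA
  have hcongr : Complex.I • ((A⁻¹)ᴴ - A⁻¹) = star A⁻¹ * (Complex.I • (A - Aᴴ)) * A⁻¹ := by
    rw [star_eq_conjTranspose, Matrix.mul_smul, Matrix.smul_mul, Matrix.mul_sub, Matrix.sub_mul,
      Matrix.mul_assoc, mul_nonsing_inv _ hdet, Matrix.mul_one, ← conjTranspose_mul,
      mul_nonsing_inv _ hdet, conjTranspose_one, Matrix.one_mul]
  rw [hcongr]
  exact (IsUnit.posDef_star_left_conjugate_iff (isUnit_nonsing_inv_iff.mpr hA)).mpr h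

theorem posDef_I_smul_sub_conjTranspose_add_inv_inv {A H : Matrix n n ℂ} (hH : H.IsHermitian)
    (h : (Complex.I • (A - Aᴴ)).PosDef) :
    (Complex.I • ((H + A⁻¹)⁻¹ - ((H + A⁻¹)⁻¹)ᴴ)).PosDef := by
  have hS : (Complex.I • ((H + A⁻¹)ᴴ - (H + A⁻¹)ᴴᴴ)).PosDef := by
    rw [conjTranspose_conjTranspose, conjTranspose_add, hH.eq, add_sub_add_left_eq_sub]
    exact posDef_I_smul_conjTranspose_inv_sub h
  simpa only [conjTranspose_nonsing_inv, conjTranspose_conjTranspose]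
    using posDef_I_smul_conjTranspose_inv_sub hS

theorem posDef_sfraction_head {m : ℕ} (hm : 1 ≤ m) {L Lhat : ℕ → Matrix n n ℝ}
    (hL : ∀ k, 1 ≤ k → k ≤ m → (L k).PosDef) (hLhat : ∀ k, 1 ≤ k → k ≤ m → (Lhat k).PosDef)
    {z : ℝ} (hz : z < 0) {D : ℕ → Matrix n n ℝ}
    (hDm : D m = L m - z • (Lhat m)⁻¹)
    (hrec : ∀ k, 1 ≤ k → k < m → D k = ((L k)⁻¹ + (D (k + 1))⁻¹)⁻¹ - z • (Lhat k)⁻¹) :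
    (D 1).PosDef := by
  have hshift : ∀ k, 1 ≤ k → k ≤ m → (-z • (Lhat k)⁻¹).PosDef := fun k hk hkm =>
    (hLhat k hk hkm).inv.smul (neg_pos.mpr hz)
  refine Nat.decreasingInduction' (P := fun k => (D k).PosDef) (fun k hkm hk ih => ?_) hm ?_
  · rw [hrec k hk hkm, sub_eq_add_neg, ← neg_smul]
    exact ((hL k hk hkm.le).inv.add ih.inv).inv.add (hshift k hk hkm.le)
  · rw [hDm, sub_eq_add_neg, ← neg_smul]
    exact (hL m hm le_rfl).add (hshift m hm le_rfl)

theorem posDef_I_smul_sub_conjTranspose_sfraction_head {m : ℕ} (hm : 1 ≤ m)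
    {L Lhat : ℕ → Matrix n n ℂ}
    (hL : ∀ k, 1 ≤ k → k ≤ m → (L k).PosDef) (hLhat : ∀ k, 1 ≤ k → k ≤ m → (Lhat k).PosDef)
    {w : ℂ} (hw : 0 < w.im) {D : ℕ → Matrix n n ℂ}
    (hDm : D m = L m - w • (Lhat m)⁻¹)
    (hrec : ∀ k, 1 ≤ k → k < m → D k = ((L k)⁻¹ + (D (k + 1))⁻¹)⁻¹ - w • (Lhat k)⁻¹) :
    (Complex.I • (D 1 - (D 1)ᴴ)).PosDef := by
  refine Nat.decreasingInduction' (P := fun k => (Complex.I • (D k - (D k)ᴴ)).PosDef)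
    (fun k hkm hk ih => ?_) hm ?_
  · rw [hrec k hk hkm]
    exact posDef_I_smul_sub_conjTranspose_sub_smul hw
      (posDef_I_smul_sub_conjTranspose_add_inv_inv (hL k hk hkm.le).inv.1 ih).posSemidef
      (hLhat k hk hkm.le).inv
  · rw [hDm]
    refine posDef_I_smul_sub_conjTranspose_sub_smul hw ?_ (hLhat m hm le_rfl).inv
    rw [(hL m hm le_rfl).1.eq, sub_self, smul_zero]
    exact .zero

end Matrix

theorem stmt19_general {p K : ℕ}
    (Ki : Fin p → ℕ)
    (m : Fin p → ℕ) (hm : ∀ i, 1 ≤ m i)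
    (L Lhat : (i : Fin p) → ℕ → Matrix (Fin (Ki i)) (Fin (Ki i)) ℝ)
    (hL : ∀ i k, 1 ≤ k → k ≤ m i → (L i k).PosDef)
    (hLhat : ∀ i k, 1 ≤ k → k ≤ m i → (Lhat i k).PosDef)
    (Q : (i : Fin p) → Matrix (Fin K) (Fin (Ki i)) ℝ)
    (hQ : (∑ i, Q i * (Q i)ᵀ).PosDef) :
    -- (a) negative real axis
    (∀ z : ℝ, z < 0 →
      ∀ D : (i : Fin p) → ℕ → Matrix (Fin (Ki i)) (Fin (Ki i)) ℝ,
        (∀ i, D i (m i) = L i (m i) - z • (Lhat i (m i))⁻¹) →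
        (∀ i k, 1 ≤ k → k < m i →
          D i k = ((L i k)⁻¹ + (D i (k + 1))⁻¹)⁻¹ - z • (Lhat i k)⁻¹) →
        (∑ i, Q i * D i 1 * (Q i)ᵀ).PosDef ∧
        ((∑ i, Q i * D i 1 * (Q i)ᵀ)⁻¹).PosDef) ∧
    -- (b) upper half plane
    (∀ w : ℂ, 0 < w.im →
      ∀ D : (i : Fin p) → ℕ → Matrix (Fin (Ki i)) (Fin (Ki i)) ℂ,
        (∀ i, D i (m i) = (L i (m i)).map Complex.ofReal -
          w • ((Lhat i (m i)).map Complex.ofReal)⁻¹) →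
        (∀ i k, 1 ≤ k → k < m i →
          D i k = (((L i k).map Complex.ofReal)⁻¹ + (D i (k + 1))⁻¹)⁻¹ -
            w • ((Lhat i k).map Complex.ofReal)⁻¹) →
        (Complex.I •
          ((∑ i, (Q i).map Complex.ofReal * D i 1 * ((Q i).map Complex.ofReal)ᵀ) -
           (∑ i, (Q i).map Complex.ofReal * D i 1 * ((Q i).map Complex.ofReal)ᵀ)ᴴ)).PosDef ∧
        IsUnit (∑ i, (Q i).map Complex.ofReal * D i 1 * ((Q i).map Complex.ofReal)ᵀ) ∧
        (Complex.I •
          (((∑ i, (Q i).map Complex.ofReal * D i 1 * ((Q i).map Complex.ofReal)ᵀ)⁻¹)ᴴ -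
           (∑ i, (Q i).map Complex.ofReal * D i 1 * ((Q i).map Complex.ofReal)ᵀ)⁻¹)).PosDef) := by
  refine ⟨fun z hz D hDm hrec => ?_, fun w hw D hDm hrec => ?_⟩
  · simp_rw [← conjTranspose_eq_transpose_of_trivial] at hQ ⊢
    have hM := hQ.sum_mul_mul_conjTranspose fun i =>
      posDef_sfraction_head (hm i) (hL i) (hLhat i) hz (hDm i) (hrec i)
    exact ⟨hM, hM.inv⟩
  · have hQC : (∑ i, (Q i).map Complex.ofReal * ((Q i).map Complex.ofReal)ᴴ).PosDef := by
      convert hQ.map_ofReal_s19 using 1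
      ext a b
      simp [← transpose_map_ofReal, Matrix.sum_apply, Matrix.mul_apply]
    have hM := posDef_I_smul_sub_conjTranspose_sum_mul_mul_conjTranspose hQC fun i =>
      posDef_I_smul_sub_conjTranspose_sfraction_head (hm i)
        (fun k hk hkm => (hL i k hk hkm).map_ofReal_s19)
        (fun k hk hkm => (hLhat i k hk hkm).map_ofReal_s19) hw (hDm i) (hrec i)
    simp_rw [transpose_map_ofReal]
    exact ⟨hM, isUnit_of_posDef_I_smul_sub_conjTranspose hM, posDef_I_smul_conjTranspose_inv_sub hM⟩

theorem stmt19 {p K : ℕ} (hp : 0 < p) (hK : 0 < K)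
    (Ki : Fin p → ℕ) (hKi : ∀ i, 0 < Ki i)
    (m : Fin p → ℕ) (hm : ∀ i, 1 ≤ m i)
    (L Lhat : (i : Fin p) → ℕ → Matrix (Fin (Ki i)) (Fin (Ki i)) ℝ)
    (hL : ∀ i k, 1 ≤ k → k ≤ m i → (L i k).PosDef)
    (hLhat : ∀ i k, 1 ≤ k → k ≤ m i → (Lhat i k).PosDef)
    (Q : (i : Fin p) → Matrix (Fin K) (Fin (Ki i)) ℝ)
    (hQ : (∑ i, Q i * (Q i)ᵀ).PosDef) :
    -- (a) negative real axis
    (∀ z : ℝ, z < 0 →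
      ∀ D : (i : Fin p) → ℕ → Matrix (Fin (Ki i)) (Fin (Ki i)) ℝ,
        (∀ i, D i (m i) = L i (m i) - z • (Lhat i (m i))⁻¹) →
        (∀ i k, 1 ≤ k → k < m i →
          D i k = ((L i k)⁻¹ + (D i (k + 1))⁻¹)⁻¹ - z • (Lhat i k)⁻¹) →
        (∑ i, Q i * D i 1 * (Q i)ᵀ).PosDef ∧
        ((∑ i, Q i * D i 1 * (Q i)ᵀ)⁻¹).PosDef) ∧
    -- (b) upper half plane
    (∀ w : ℂ, 0 < w.im →
      ∀ D : (i : Fin p) → ℕ → Matrix (Fin (Ki i)) (Fin (Ki i)) ℂ,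
        (∀ i, D i (m i) = (L i (m i)).map Complex.ofReal -
          w • ((Lhat i (m i)).map Complex.ofReal)⁻¹) →
        (∀ i k, 1 ≤ k → k < m i →
          D i k = (((L i k).map Complex.ofReal)⁻¹ + (D i (k + 1))⁻¹)⁻¹ -
            w • ((Lhat i k).map Complex.ofReal)⁻¹) →
        (Complex.I •
          ((∑ i, (Q i).map Complex.ofReal * D i 1 * ((Q i).map Complex.ofReal)ᵀ) -
           (∑ i, (Q i).map Complex.ofReal * D i 1 * ((Q i).map Complex.ofReal)ᵀ)ᴴ)).PosDef ∧
        IsUnit (∑ i, (Q i).map Complex.ofReal * D i 1 * ((Q i).map Complex.ofReal)ᵀ) ∧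
        (Complex.I •
          (((∑ i, (Q i).map Complex.ofReal * D i 1 * ((Q i).map Complex.ofReal)ᵀ)⁻¹)ᴴ -
           (∑ i, (Q i).map Complex.ofReal * D i 1 * ((Q i).map Complex.ofReal)ᵀ)⁻¹)).PosDef) :=
  stmt19_general Ki m hm L Lhat hL hLhat Q hQ
end
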